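/- (Ping Pong Lemma for trees.) Let g₁, ..., gₙ be hyperbolic isometries of a simplicial tree with axes γ₁, ..., γₙ. Suppose that for each i there is an open segment Pᵢ ⊆ γᵢ of length l(gᵢ) such that the union over j ≠ i of the projections Proj_{γᵢ}(γⱼ) is contained in Pᵢ. Then the group generated by g₁, ..., gₙ is free of rank n. -/

import Mathlib

open SimpleGraph

variable {V : Type*}

/-- Translation length of a graph automorphism of `G` (min displacement over vertices). -/
noncomputable def ell (G : SimpleGraph V) (g : G ≃g G) : ℕ :=
  sInf (Set.range fun x => G.dist x (g x))

/-- The set of vertices realizing the minimal displacement (the axis, for hyperbolic `g`). -/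
def axisSet (G : SimpleGraph V) (g : G ≃g G) : Set V :=
  {x | G.dist x (g x) = ell G g}

/-- `g` acts without inversions: no edge is flipped. -/
def noInv (G : SimpleGraph V) (g : G ≃g G) : Prop :=
  ∀ x y, G.Adj x y → ¬(g x = y ∧ g y = x)

/-- The segment (geodesic) between `p` and `q` in the tree. -/
def seg (G : SimpleGraph V) (p q : V) : Set V :=
  {x | G.dist p x + G.dist x q = G.dist p q}

/-- The open segment between `p` and `q` (endpoints removed). -/
def openSeg (G : SimpleGraph V) (p q : V) : Set V :=
  {x | x ∈ seg G p q ∧ x ≠ p ∧ x ≠ q}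

/-- Distance from a vertex to a set of vertices. -/
noncomputable def distToSet (G : SimpleGraph V) (x : V) (S : Set V) : ℕ :=
  sInf (G.dist x '' S)

/-- Distance between two sets of vertices. -/
noncomputable def setDist (G : SimpleGraph V) (S T : Set V) : ℕ :=
  sInf (Set.image2 G.dist S T)

/-- The projection of `B` onto `A`: points of `A` at minimal distance from `B`. -/
noncomputable def projOn (G : SimpleGraph V) (A B : Set V) : Set V :=
  {x | x ∈ A ∧ distToSet G x B = setDist G A B}

/-- `g` translates the vertex `p` (assumed on its axis) towards the vertex `q`. -/
noncomputable def translatesToward (G : SimpleGraph V) (g : G ≃g G) (p q : V) : Prop :=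
  (G.dist (g p) q : ℤ) = |(G.dist p q : ℤ) - (ell G g : ℤ)|

/-!
Each axis `A i` (the vertices of minimal displacement `ell G (g i)`) is a convex subtree along
which `g i ^ k` translates by `|k| * ell G (g i)`; its convexity is proved by induction on the
distance, using that `g⁻¹ p`, `p`, `g p` lie in this order on a geodesic for `p ∈ A i`. Every
vertex `x` has a gate on a convex set: the point through which all geodesics from `x` to the set
pass. Since the projection of `A j` on `A i` lies in the open segment `P i`, a vertex whose gate on
`A j` is outside `P j` has its gate on `A i` inside `P i`. Hence the sets `X i` of vertices whose
gate on `A i` is outside `P i` are disjoint, and `g i ^ k` (`k ≠ 0`) maps `X j` into `X i`: it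
moves the gate, which lies in `P i`, by at least the length of `P i`. The ping-pong lemma concludes;
for a single generator it suffices that `g i` has infinite order.
-/

namespace FreeGroup

open scoped Pointwise

variable {ι H : Type*} [Group H]

theorem exists_of_default_zpow_eq [Unique ι] (w : FreeGroup ι) :
    ∃ k : ℤ, of default ^ k = w :=
  ⟨_, equivIntOfUnique.symm_apply_apply w⟩

theorem injective_lift_of_subsingleton [Subsingleton ι] (a : ι → H)
    (ha : ∀ i (k : ℤ), a i ^ k = 1 → k = 0) : Function.Injective (lift a) := by
  rcases isEmpty_or_nonempty ι with hι | ⟨⟨i⟩⟩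
  · exact Function.injective_of_subsingleton _
  let := uniqueOfSubsingleton i
  refine (injective_iff_map_eq_one _).2 fun w hw => ?_
  obtain ⟨k, rfl⟩ := exists_of_default_zpow_eq w
  rw [map_zpow, lift_apply_of] at hw
  rw [ha _ _ hw, zpow_zero]

theorem injective_lift_of_zpow_ping_pong [Nontrivial ι] {α : Type*} [MulAction H α]
    (a : ι → H) (X : ι → Set α) (hne : ∀ i, (X i).Nonempty)
    (hdisj : Pairwise (Function.onFun Disjoint X))
    (hpp : Pairwise fun i j => ∀ k : ℤ, k ≠ 0 → a i ^ k • X j ⊆ X i) :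
    Function.Injective (lift a) := by
  have hlift : lift a = (Monoid.CoprodI.lift fun i => lift fun _ : Unit => a i).comp
      freeGroupEquivCoprodI.toMonoidHom := by
    ext i
    simp
  rw [hlift, MonoidHom.coe_comp]
  refine .comp ?_ freeGroupEquivCoprodI.injective
  have hcard : 3 ≤ Cardinal.mk ι ∨ ∃ _ : ι, 3 ≤ Cardinal.mk (FreeGroup Unit) := by
    obtain ⟨i⟩ := (inferInstance : Nonempty ι)
    refine .inr ⟨i, ?_⟩
    rw [equivIntOfUnique.cardinal_eq, Cardinal.mk_int]
    exact Cardinal.natCast_lt_aleph0.le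
  refine Monoid.CoprodI.lift_injective_of_ping_pong _ hcard X hne hdisj fun i j hij w hw => ?_
  obtain ⟨k, rfl⟩ := exists_of_default_zpow_eq w
  rw [map_zpow, lift_apply_of]
  exact hpp hij k fun hk => hw (by rw [hk, zpow_zero])

end FreeGroup

namespace SimpleGraph

variable {V' : Type*} {G : SimpleGraph V} {G' : SimpleGraph V'}

theorem Hom.edist_map_le (f : G →g G') (x y : V) : G'.edist (f x) (f y) ≤ G.edist x y := by
  rw [edist_eq_sInf (G := G)]
  exact le_sInf fun _ ⟨w, hw⟩ => hw ▸ (edist_le (w.map f)).trans_eq (by simp)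

theorem Iso.dist_map (f : G ≃g G') (x y : V) : G'.dist (f x) (f y) = G.dist x y :=
  congrArg ENat.toNat <| le_antisymm (f.toHom.edist_map_le x y)
    (by simpa using f.symm.toHom.edist_map_le (f x) (f y))

theorem Walk.IsPath.append {u v w : V} {p : G.Walk u v} {q : G.Walk v w} (hp : p.IsPath)
    (hq : q.IsPath) (h : ∀ x ∈ p.support, x ∈ q.support → x = v) : (p.append q).IsPath := by
  rw [isPath_def, support_append]
  refine hp.support_nodup.append hq.support_nodup.tail fun x hxp hxq => ?_
  have hv : v ∉ q.support.tail := by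
    have := hq.support_nodup
    rw [← q.cons_tail_support] at this
    exact (List.nodup_cons.mp this).1
  exact hv (h x hxp (List.mem_of_mem_tail hxq) ▸ hxq)

theorem IsAcyclic.eq_of_isPath (hG : G.IsAcyclic) {a b : V} {w w' : G.Walk a b} (hw : w.IsPath)
    (hw' : w'.IsPath) : w = w' :=
  congrArg Subtype.val <| (hG.subsingleton_path a b).elim ⟨w, hw⟩ ⟨w', hw'⟩

theorem Walk.mem_seg_of_mem_support {a b x : V} {w : G.Walk a b} (hw : w.length = G.dist a b)
    (hx : x ∈ w.support) : x ∈ seg G a b := by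
  classical
  have h₁ := length_eq_dist_of_subwalk hw (w.isSubwalk_takeUntil hx)
  have h₂ := length_eq_dist_of_subwalk hw (w.isSubwalk_dropUntil hx)
  have h₃ := congrArg length (w.take_spec hx)
  rw [length_append] at h₃
  show G.dist a x + G.dist x b = G.dist a b
  omega

theorem Iso.apply_mem_seg_iff (f : G ≃g G) {a b x : V} :
    f x ∈ seg G (f a) (f b) ↔ x ∈ seg G a b := by
  simp only [seg, Set.mem_ofPred_eq, f.dist_map]

end SimpleGraph

section Segments

variable {G : SimpleGraph V} {a b m : V}

@[simp] theorem left_mem_seg : a ∈ seg G a b := by simp [seg]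

@[simp] theorem right_mem_seg : b ∈ seg G a b := by simp [seg]

theorem seg_comm (G : SimpleGraph V) (a b : V) : seg G a b = seg G b a := by
  ext x
  have := G.dist_comm (u := a) (v := x)
  have := G.dist_comm (u := x) (v := b)
  have := G.dist_comm (u := a) (v := b)
  change _ = _ ↔ _ = _
  omega

theorem seg_subset_seg (hc : G.Connected) (hm : m ∈ seg G a b) : seg G a m ⊆ seg G a b := by
  intro y hy
  have := hc.dist_triangle (u := a) (v := y) (w := b)
  have := hc.dist_triangle (u := y) (v := m) (w := b)
  change _ = _ at hm hy ⊢
  omega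

theorem exists_adj_mem_seg (hc : G.Connected) (hab : a ≠ b) :
    ∃ u, G.Adj a u ∧ u ∈ seg G a b := by
  obtain ⟨w, hw⟩ := hc.exists_walk_length_eq_dist a b
  exact ⟨w.snd, w.adj_snd (Walk.not_nil_of_ne hab),
    w.mem_seg_of_mem_support hw (w.getVert_mem_support 1)⟩

end Segments

def IsConvex (G : SimpleGraph V) (A : Set V) : Prop :=
  ∀ ⦃p⦄, p ∈ A → ∀ ⦃q⦄, q ∈ A → seg G p q ⊆ A

def IsGate (G : SimpleGraph V) (A : Set V) (x c : V) : Prop :=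
  c ∈ A ∧ ∀ p ∈ A, G.dist x p = G.dist x c + G.dist c p

theorem IsGate.map {G : SimpleGraph V} {A : Set V} {x c : V} (f : G ≃g G)
    (hf : ∀ p, f p ∈ A ↔ p ∈ A) (h : IsGate G A x c) : IsGate G A (f x) (f c) := by
  refine ⟨(hf c).2 h.1, fun p hp => ?_⟩
  obtain ⟨q, rfl⟩ := f.surjective p
  rw [f.dist_map, f.dist_map, f.dist_map]
  exact h.2 q ((hf q).1 hp)

namespace SimpleGraph.IsTree

variable {G : SimpleGraph V} {A B P Q : Set V} {a b c e m p x y cA cB : V}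

theorem length_eq_dist_of_isPath (hT : G.IsTree) {w : G.Walk a b} (hw : w.IsPath) :
    w.length = G.dist a b := by
  obtain ⟨w', hw', hlen⟩ := hT.connected.exists_path_of_dist a b
  rw [hT.isAcyclic.eq_of_isPath hw hw', hlen]

theorem mem_support_of_mem_seg (hT : G.IsTree) {w : G.Walk a b} (hw : w.length = G.dist a b)
    (hx : x ∈ seg G a b) : x ∈ w.support := by
  obtain ⟨w₁, hw₁⟩ := hT.connected.exists_walk_length_eq_dist a x
  obtain ⟨w₂, hw₂⟩ := hT.connected.exists_walk_length_eq_dist x b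
  have hlen : (w₁.append w₂).length = G.dist a b := by
    rw [Walk.length_append, hw₁, hw₂]
    exact hx
  rw [hT.isAcyclic.eq_of_isPath (w.isPath_of_length_eq_dist hw)
    ((w₁.append w₂).isPath_of_length_eq_dist hlen)]
  exact Walk.mem_support_append_iff .. |>.2 (.inl w₁.end_mem_support)

theorem mem_seg_or_mem_seg (hT : G.IsTree) (hx : x ∈ seg G a b) (hy : y ∈ seg G a b) :
    x ∈ seg G a y ∨ x ∈ seg G y b := by
  obtain ⟨p, hp⟩ := hT.connected.exists_walk_length_eq_dist a y
  obtain ⟨q, hq⟩ := hT.connected.exists_walk_length_eq_dist y b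
  have hpq : (p.append q).length = G.dist a b := by
    rw [Walk.length_append, hp, hq]
    exact hy
  rcases Walk.mem_support_append_iff .. |>.1 (hT.mem_support_of_mem_seg hpq hx) with h | h
  · exact .inl (p.mem_seg_of_mem_support hp h)
  · exact .inr (q.mem_seg_of_mem_support hq h)

theorem mem_seg_of_dist_le (hT : G.IsTree) (hx : x ∈ seg G a b) (hy : y ∈ seg G a b)
    (hxy : G.dist a x ≤ G.dist a y) : x ∈ seg G a y := by
  refine (hT.mem_seg_or_mem_seg hx hy).elim id fun h => ?_
  change _ = _ at hx hy h
  rw [hT.connected.dist_eq_zero_iff.1 (show G.dist y x = 0 by omega)]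
  exact right_mem_seg

theorem mem_seg_of_inter_subset_singleton (hT : G.IsTree) (h : seg G x m ∩ seg G m y ⊆ {m}) :
    m ∈ seg G x y := by
  obtain ⟨p, hp⟩ := hT.connected.exists_walk_length_eq_dist x m
  obtain ⟨q, hq⟩ := hT.connected.exists_walk_length_eq_dist m y
  have hpq := (p.isPath_of_length_eq_dist hp).append (q.isPath_of_length_eq_dist hq)
    fun z hzp hzq => h ⟨p.mem_seg_of_mem_support hp hzp, q.mem_seg_of_mem_support hq hzq⟩
  have := hT.length_eq_dist_of_isPath hpq
  rw [Walk.length_append, hp, hq] at this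
  exact this

theorem exists_isGate (hT : G.IsTree) (hA : IsConvex G A) (hne : A.Nonempty) (x : V) :
    ∃ c, IsGate G A x c := by
  obtain ⟨c, hcA, hc⟩ := Nat.sInf_mem (hne.image (G.dist x))
  have hmin : ∀ z ∈ A, G.dist x c ≤ G.dist x z :=
    fun z hz => hc ▸ Nat.sInf_le ⟨z, hz, rfl⟩
  refine ⟨c, hcA, fun p hp => ?_⟩
  suffices c ∈ seg G x p from this.symm
  refine hT.mem_seg_of_inter_subset_singleton fun z ⟨hxz, hzp⟩ => ?_
  have := hmin z (hA hcA hp hzp)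
  change _ = _ at hxz
  exact hT.connected.dist_eq_zero_iff.1 (by omega)

theorem isConvex_seg (hT : G.IsTree) (a b : V) : IsConvex G (seg G a b) := by
  intro y hy z hz
  wlog h : G.dist a y ≤ G.dist a z generalizing y z
  · exact seg_comm G y z ▸ this hz hy (by omega)
  have hyz : y ∈ seg G z a := seg_comm G a z ▸ hT.mem_seg_of_dist_le hy hz h
  calc seg G y z = seg G z y := seg_comm G y z
    _ ⊆ seg G z a := seg_subset_seg hT.connected hyz
    _ = seg G a z := seg_comm G z a
    _ ⊆ seg G a b := seg_subset_seg hT.connected hz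

theorem exists_median (hT : G.IsTree) (a b c : V) :
    ∃ m, m ∈ seg G a b ∧ m ∈ seg G a c ∧ m ∈ seg G b c := by
  obtain ⟨m, hm, hgate⟩ :=
    hT.exists_isGate (hT.isConvex_seg a b) ⟨a, left_mem_seg⟩ c
  refine ⟨m, hm, ?_, ?_⟩
  · rw [seg_comm]
    exact (hgate a left_mem_seg).symm
  · rw [seg_comm]
    exact (hgate b right_mem_seg).symm

theorem mem_seg_or_mem_seg_of_mem_seg (hT : G.IsTree) (hp : p ∈ seg G a b) (q : V) :
    p ∈ seg G a q ∨ p ∈ seg G b q := by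
  obtain ⟨m, hmab, hmaq, hmbq⟩ := hT.exists_median a b q
  rcases hT.mem_seg_or_mem_seg hp hmab with h | h
  · exact .inl (seg_subset_seg hT.connected hmaq h)
  · rw [seg_comm] at h
    exact .inr (seg_subset_seg hT.connected hmbq h)

theorem dist_eq_add_add_of_mem_seg (hT : G.IsTree) (hb : b ∈ seg G a c) (hc : c ∈ seg G b e)
    (hbc : b ≠ c) :
    G.dist a e = G.dist a b + G.dist b c + G.dist c e := by
  have hce : c ∈ seg G a e := by
    refine hT.mem_seg_of_inter_subset_singleton fun z ⟨hz, hz'⟩ => ?_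
    have := hT.connected.dist_triangle (u := b) (v := z) (w := e)
    have := G.dist_comm (u := c) (v := z)
    have := G.dist_comm (u := b) (v := z)
    refine hT.connected.dist_eq_zero_iff.1 ?_
    rcases hT.mem_seg_or_mem_seg hz hb with h | h <;> change _ = _ at hb hc hz hz' h
    · exact absurd (hT.connected.dist_eq_zero_iff.1 (by omega)) hbc
    · omega
  change _ = _ at hb hce
  omega

theorem dist_lt_of_mem_openSeg (hT : G.IsTree) (hx : x ∈ openSeg G a b)
    (hy : y ∈ openSeg G a b) : G.dist x y < G.dist a b := by
  wlog h : G.dist a x ≤ G.dist a y generalizing x y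
  · exact G.dist_comm (u := x) ▸ this hy hx (by omega)
  have hxy := hT.mem_seg_of_dist_le hx.1 hy.1 h
  have := hT.connected.pos_dist_of_ne hx.2.1.symm
  have := hT.connected.pos_dist_of_ne hy.2.2
  have hy' := hy.1
  change _ = _ at hxy hy'
  omega

theorem isGate_mem_projOn (hT : G.IsTree) (hA : IsConvex G A) (hB : IsConvex G B) (hy : y ∈ B)
    (hc : IsGate G A y c) : c ∈ projOn G A B := by
  obtain ⟨p₀, hp₀, q₀, hq₀, hδ⟩ := Nat.sInf_mem
    (Set.image2_nonempty_iff.2 ⟨⟨c, hc.1⟩, ⟨y, hy⟩⟩ : (Set.image2 G.dist A B).Nonempty)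
  change G.dist p₀ q₀ = setDist G A B at hδ
  -- `setDist G A B` is realised by `q₀ ∈ B` and its gate `p` on `A`; the median of `c`, `y`,
  -- `q₀` is a point of `B` within that distance of `c`.
  obtain ⟨p, hpA, hp⟩ := hT.exists_isGate hA ⟨c, hc.1⟩ q₀
  have hδ_le : ∀ p ∈ A, ∀ q ∈ B, setDist G A B ≤ G.dist p q :=
    fun p hp q hq => Nat.sInf_le (Set.mem_image2_of_mem hp hq)
  have hq₀p : G.dist q₀ p = setDist G A B := by
    have := hp p₀ hp₀
    have := hδ_le p hpA q₀ hq₀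
    have := G.dist_comm (u := p) (v := q₀)
    have := G.dist_comm (u := q₀) (v := p₀)
    omega
  refine ⟨hc.1, le_antisymm ?_ (le_csInf ((Set.nonempty_of_mem hy).image _) ?_)⟩
  · obtain ⟨m, hmc, hmy, hmq⟩ := hT.exists_median c y q₀
    have : distToSet G c B ≤ G.dist c m := Nat.sInf_le ⟨m, hB hy hq₀ hmq, rfl⟩
    have := hp c hc.1
    have := hc.2 p hpA
    have := hT.connected.dist_triangle (u := y) (v := q₀) (w := p)
    have := G.dist_comm (u := c) (v := y)
    have := G.dist_comm (u := c) (v := p)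
    have := G.dist_comm (u := c) (v := q₀)
    have := G.dist_comm (u := y) (v := m)
    change _ = _ at hmc hmy hmq
    omega
  · rintro _ ⟨q, hq, rfl⟩
    exact hδ_le c hc.1 q hq

theorem isGate_mem_of_isGate_not_mem (hT : G.IsTree) (hA : IsConvex G A) (hB : IsConvex G B)
    (hPA : projOn G A B ⊆ P) (hQB : projOn G B A ⊆ Q) (hcA : IsGate G A x cA)
    (hcB : IsGate G B x cB) (hcAP : cA ∉ P) : cB ∈ Q := by
  obtain ⟨w, hw⟩ := hT.exists_isGate hA ⟨cA, hcA.1⟩ cB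
  obtain ⟨w', hw'⟩ := hT.exists_isGate hB ⟨cB, hcB.1⟩ cA
  -- `w ∈ P` (it lies in the projection of `B` on `A`), so `x`, `cA`, `w`, `cB` lie in this order
  -- on a geodesic; then `cB` is the gate of `cA` on `B`, which lies in `Q`.
  have hwcA : cA ≠ w := fun h => hcAP (h ▸ hPA (hT.isGate_mem_projOn hA hB hcB.1 hw))
  have hcA_seg : cA ∈ seg G x w := (hcA.2 w hw.1).symm
  have hw_seg : w ∈ seg G cA cB := by
    rw [seg_comm]
    exact (hw.2 cA hcA.1).symm
  have hx := hT.dist_eq_add_add_of_mem_seg hcA_seg hw_seg hwcA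
  have := hcB.2 w' hw'.1
  have := hw'.2 cB hcB.1
  have := hT.connected.dist_triangle (u := x) (v := cA) (w := w')
  change _ = _ at hw_seg
  rw [hT.connected.dist_eq_zero_iff.1 (show G.dist cB w' = 0 by omega)]
  exact hQB (hT.isGate_mem_projOn hB hA hcA.1 hw')

end SimpleGraph.IsTree

section Axis

variable {G : SimpleGraph V} {g : G ≃g G} {m p q x : V}

theorem ell_le_dist (g : G ≃g G) (x : V) : ell G g ≤ G.dist x (g x) :=
  Nat.sInf_le ⟨x, rfl⟩

theorem ell_inv (g : G ≃g G) : ell G g⁻¹ = ell G g := by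
  have : (fun x => G.dist x (g⁻¹ x)) = (fun y => G.dist y (g y)) ∘ ⇑g⁻¹ := by
    funext x
    simp [G.dist_comm (u := x)]
  rw [ell, ell, this, (g⁻¹).surjective.range_comp]

theorem axisSet_inv (g : G ≃g G) : axisSet G g⁻¹ = axisSet G g := by
  ext x
  change _ = _ ↔ _ = _
  rw [ell_inv, ← g.dist_map x, RelIso.apply_inv_self, G.dist_comm]

theorem axisSet_nonempty (hc : G.Connected) (g : G ≃g G) : (axisSet G g).Nonempty :=
  have := hc.nonempty
  Nat.sInf_mem (Set.range_nonempty fun x => G.dist x (g x))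

theorem ne_apply_of_mem_axisSet (hl : 0 < ell G g) (hx : x ∈ axisSet G g) : x ≠ g x := by
  intro h
  change _ = _ at hx
  rw [← h, G.dist_self] at hx
  omega

theorem apply_mem_axisSet_of_commute {f : G ≃g G} (hfg : Commute f g) (hx : x ∈ axisSet G g) :
    f x ∈ axisSet G g := by
  change G.dist (f x) (g (f x)) = ell G g
  rw [show g (f x) = f (g x) from DFunLike.congr_fun hfg.eq.symm x, f.dist_map]
  exact hx

theorem apply_mem_axisSet (hx : x ∈ axisSet G g) : g x ∈ axisSet G g :=
  apply_mem_axisSet_of_commute (.refl g) hx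

theorem inv_apply_mem_axisSet (hx : x ∈ axisSet G g) : g⁻¹ x ∈ axisSet G g :=
  apply_mem_axisSet_of_commute (.inv_left (.refl g)) hx

theorem zpow_apply_mem_axisSet_iff {k : ℤ} : (g ^ k) x ∈ axisSet G g ↔ x ∈ axisSet G g := by
  refine ⟨fun h => ?_, apply_mem_axisSet_of_commute ((Commute.refl g).zpow_left k)⟩
  simpa using apply_mem_axisSet_of_commute ((Commute.refl g).zpow_left (-k)) h

theorem seg_apply_subset_axisSet (hc : G.Connected) (hx : x ∈ axisSet G g) :
    seg G x (g x) ⊆ axisSet G g := by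
  intro z hz
  have := hc.dist_triangle (u := z) (v := g x) (w := g z)
  have := g.dist_map x z
  have := ell_le_dist g z
  change _ = _ at hz hx ⊢
  omega

theorem apply_apply_ne_self (hT : G.IsTree) (hni : noInv G g) (hl : 0 < ell G g)
    (hx : x ∈ axisSet G g) : g (g x) ≠ x := by
  -- A `g` swapping `x` and `g x` reverses `seg G x (g x)`: it moves the neighbour `u` of `x` there
  -- by `ell G g - 2`, or inverts the edge `x u` if `ell G g = 1`.
  intro hggx
  obtain ⟨u, hxu, hu⟩ := exists_adj_mem_seg hT.connected (ne_apply_of_mem_axisSet hl hx)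
  have hgu : g u ∈ seg G x (g x) := by
    simpa [hggx, seg_comm G x] using g.apply_mem_seg_iff.2 hu
  have hxu' : G.dist x u = 1 := dist_eq_one_iff_adj.2 hxu
  have hgxgu : G.dist (g x) (g u) = 1 := by rw [g.dist_map, hxu']
  have := G.dist_comm (u := g x) (v := g u)
  have hx' : G.dist x (g x) = ell G g := hx
  have hu' : G.dist x u + G.dist u (g x) = G.dist x (g x) := hu
  have hgu' : G.dist x (g u) + G.dist (g u) (g x) = G.dist x (g x) := hgu
  rcases Nat.lt_or_ge (ell G g) 2 with hL | hL
  · have hu_eq : u = g x := hT.connected.dist_eq_zero_iff.1 (by omega)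
    exact hni x u hxu ⟨hu_eq.symm, by rw [hu_eq, hggx]⟩
  · have hugu := hT.mem_seg_of_dist_le hu hgu (by omega)
    have := ell_le_dist g u
    change _ = _ at hugu
    omega

theorem dist_apply_apply (hT : G.IsTree) (hni : noInv G g) (hl : 0 < ell G g)
    (hx : x ∈ axisSet G g) : G.dist x (g (g x)) = 2 * ell G g := by
  -- `g x` and `g (g x)` lie on `seg G m (g m)`, at distances `ell G g - G.dist x m` and
  -- `G.dist x m` from `m`; as they are `ell G g` apart, `m = g x` or `g (g x) = x`.
  obtain ⟨m, hm₁, hm₂, hm₃⟩ := hT.exists_median x (g x) (g (g x))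
  have hgx := apply_mem_axisSet hx
  have hm := seg_apply_subset_axisSet hT.connected hx hm₁
  have := g.dist_map x m
  have := g.dist_map (g x) m
  have := G.dist_comm (u := g (g x)) (v := g x)
  change _ = _ at hx hgx hm hm₁ hm₂ hm₃
  have h₁ : g x ∈ seg G m (g m) := by change _ = _; omega
  have h₂ : g (g x) ∈ seg G m (g m) := by change _ = _; omega
  rcases le_total (G.dist m (g x)) (G.dist m (g (g x))) with h | h
  · have := hT.mem_seg_of_dist_le h₁ h₂ h
    change _ = _ at this
    omega
  · have := hT.mem_seg_of_dist_le h₂ h₁ h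
    change _ = _ at this
    have hggx := hT.connected.dist_eq_zero_iff.1 (show G.dist x (g (g x)) = 0 by omega)
    exact absurd hggx.symm (apply_apply_ne_self hT hni hl hx)

theorem pow_succ_apply (g : G ≃g G) (k : ℕ) (x : V) : (g ^ (k + 1)) x = g ((g ^ k) x) := by
  rw [pow_succ']
  rfl

theorem dist_pow_apply (hT : G.IsTree) (hni : noInv G g) (hl : 0 < ell G g)
    (hx : x ∈ axisSet G g) (k : ℕ) : G.dist x ((g ^ k) x) = k * ell G g := by
  induction k using Nat.twoStepInduction with
  | zero => simp
  | one =>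
    rw [pow_one, one_mul]
    exact hx
  | more k ih₀ ih₁ =>
    have hy : (g ^ k) x ∈ axisSet G g := by
      simpa using zpow_apply_mem_axisSet_iff (k := k) |>.2 hx
    rw [pow_succ_apply] at ih₁
    rw [pow_succ_apply, pow_succ_apply]
    have h₁ : (g ^ k) x ∈ seg G x (g ((g ^ k) x)) := by
      change _ = _ at hy ⊢
      rw [ih₀, ih₁, hy]
      ring
    have h₂ : g ((g ^ k) x) ∈ seg G ((g ^ k) x) (g (g ((g ^ k) x))) := by
      change _ = _
      rw [dist_apply_apply hT hni hl hy, apply_mem_axisSet hy, hy]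
      ring
    rw [hT.dist_eq_add_add_of_mem_seg h₁ h₂ (ne_apply_of_mem_axisSet hl hy), ih₀, hy,
      apply_mem_axisSet hy]
    ring

theorem dist_zpow_apply (hT : G.IsTree) (hni : noInv G g) (hl : 0 < ell G g)
    (hx : x ∈ axisSet G g) (k : ℤ) : G.dist x ((g ^ k) x) = k.natAbs * ell G g := by
  obtain ⟨n, rfl | rfl⟩ := Int.eq_nat_or_neg k
  · simpa using dist_pow_apply hT hni hl hx n
  · rw [zpow_neg, zpow_natCast, Int.natAbs_neg, Int.natAbs_natCast,
      ← dist_pow_apply hT hni hl hx n, ← (g ^ n).dist_map, RelIso.apply_inv_self, G.dist_comm]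

theorem eq_zero_of_zpow_eq_one (hT : G.IsTree) (hni : noInv G g) (hl : 0 < ell G g) {k : ℤ}
    (hk : g ^ k = 1) : k = 0 := by
  obtain ⟨x, hx⟩ := axisSet_nonempty hT.connected g
  have := dist_zpow_apply hT hni hl hx k
  rw [hk, RelIso.one_apply, G.dist_self] at this
  simpa [hl.ne'] using this.symm

theorem zpow_apply_not_mem_openSeg (hT : G.IsTree) (hni : noInv G g) (hl : 0 < ell G g)
    {a b c : V} (hab : G.dist a b = ell G g) (hc : c ∈ axisSet G g) (hcab : c ∈ openSeg G a b)
    {k : ℤ} (hk : k ≠ 0) : (g ^ k) c ∉ openSeg G a b := fun h => by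
  have := hT.dist_lt_of_mem_openSeg hcab h
  rw [dist_zpow_apply hT hni hl hc k, hab] at this
  have : 1 ≤ k.natAbs := Int.natAbs_pos.2 hk
  nlinarith

theorem dist_apply_eq_of_mem_seg (hT : G.IsTree) (hl : 0 < ell G g) (hm : m ∈ axisSet G g)
    (h₁ : m ∈ seg G q (g m)) (h₂ : m ∈ seg G q (g⁻¹ m)) :
    G.dist q (g q) = 2 * G.dist q m + ell G g := by
  have h₂' : g m ∈ seg G m (g q) := by
    simpa [seg_comm G m] using g.apply_mem_seg_iff.2 h₂
  rw [hT.dist_eq_add_add_of_mem_seg h₁ h₂' (ne_apply_of_mem_axisSet hl hm), hm, g.dist_map,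
    G.dist_comm (u := m)]
  ring

theorem mem_seg_apply_or_apply_mem_seg (hT : G.IsTree) (hl : 0 < ell G g)
    (hp : p ∈ axisSet G g) (hq : q ∈ axisSet G g) (hpq : p ∈ seg G q (g⁻¹ p)) :
    q ∈ seg G p (g p) ∨ g p ∈ seg G p q := by
  -- Unless `m = g p`, the branch point `m` of `q` lies between `q` and both `g m` and `g⁻¹ m`,
  -- so `dist_apply_eq_of_mem_seg` forces `q = m`.
  obtain ⟨m, hm_pq, hm_p, hm_q⟩ := hT.exists_median p q (g p)
  by_cases hmg : m = g p
  · exact .inr (hmg ▸ hm_pq)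
  left
  have hm := seg_apply_subset_axisSet hT.connected hp hm_p
  have h₁ : m ∈ seg G q (g m) := by
    have hgp : g p ∈ seg G m (g m) := by
      have := g.dist_map p m
      have hp' : G.dist p (g p) = ell G g := hp
      change _ = _ at hm hm_p ⊢
      omega
    have := hT.dist_eq_add_add_of_mem_seg hm_q hgp hmg
    change _ = _ at hm hgp ⊢
    omega
  have h₂ : m ∈ seg G q (g⁻¹ m) := by
    by_cases hmp : m = p
    · exact hmp ▸ hpq
    have hp' : p ∈ seg G m (g⁻¹ m) := by
      have hgp := g.dist_map p (g⁻¹ m)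
      rw [RelIso.apply_inv_self] at hgp
      have hm' : m ∈ axisSet G g⁻¹ := (axisSet_inv g).symm ▸ hm
      have := G.dist_comm (u := g p) (v := m)
      have := G.dist_comm (u := p) (v := m)
      have hp' : G.dist p (g p) = ell G g := hp
      change _ = _ at hm' hm_p ⊢
      rw [ell_inv] at hm'
      omega
    have := hT.dist_eq_add_add_of_mem_seg (seg_comm G p q ▸ hm_pq) hp' hmp
    change _ = _ at hp' ⊢
    omega
  have := dist_apply_eq_of_mem_seg hT hl hm h₁ h₂
  change _ = _ at hq
  rw [hT.connected.dist_eq_zero_iff.1 (show G.dist q m = 0 by omega)]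
  exact hm_p

theorem mem_seg_inv_apply_apply (hT : G.IsTree) (hni : noInv G g) (hl : 0 < ell G g)
    (hp : p ∈ axisSet G g) : p ∈ seg G (g⁻¹ p) (g p) := by
  have h₁ : G.dist (g⁻¹ p) (g (g⁻¹ p)) = ell G g := inv_apply_mem_axisSet hp
  have h₂ := dist_apply_apply hT hni hl (inv_apply_mem_axisSet hp)
  have h₃ : G.dist p (g p) = ell G g := hp
  rw [RelIso.apply_inv_self] at h₁ h₂
  change _ = _
  omega

theorem isConvex_axisSet (hT : G.IsTree) (hni : noInv G g) (hl : 0 < ell G g) :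
    IsConvex G (axisSet G g) := by
  intro p hp q hq
  induction hd : G.dist p q using Nat.strong_induction_on generalizing p with
  | _ d ih =>
  have step : ∀ r ∈ axisSet G g, r ≠ p → seg G p r ⊆ axisSet G g →
      q ∈ seg G p r ∨ r ∈ seg G p q → seg G p q ⊆ axisSet G g := by
    rintro r hr hrp hpr (hqr | hrq)
    · exact (seg_subset_seg hT.connected hqr).trans hpr
    · intro y hy
      rcases hT.mem_seg_or_mem_seg hy hrq with h | h
      · exact hpr h
      · have := hT.connected.pos_dist_of_ne hrp.symm
        change _ = _ at hrq
        exact ih _ (by omega) hr rfl h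
  rcases hT.mem_seg_or_mem_seg_of_mem_seg (mem_seg_inv_apply_apply hT hni hl hp) q with h | h
  · exact step (g p) (apply_mem_axisSet hp) (ne_apply_of_mem_axisSet hl hp).symm
      (seg_apply_subset_axisSet hT.connected hp)
      (mem_seg_apply_or_apply_mem_seg hT hl hp hq (seg_comm G _ q ▸ h))
  · rw [← axisSet_inv g] at hp hq
    have hl' : 0 < ell G g⁻¹ := (ell_inv g).symm ▸ hl
    refine step (g⁻¹ p) (axisSet_inv g ▸ apply_mem_axisSet hp)
      (ne_apply_of_mem_axisSet hl' hp).symm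
      (axisSet_inv g ▸ seg_apply_subset_axisSet hT.connected hp)
      (mem_seg_apply_or_apply_mem_seg hT hl' hp hq ?_)
    rwa [inv_inv, seg_comm]

end Axis

theorem injective_lift_of_ping_pong_tree {ι : Type*} [Nontrivial ι] {G : SimpleGraph V}
    (hT : G.IsTree) (g : ι → G ≃g G) (hni : ∀ i, noInv G (g i)) (hl : ∀ i, 0 < ell G (g i))
    (a b : ι → V) (ha : ∀ i, a i ∈ axisSet G (g i))
    (hab : ∀ i, G.dist (a i) (b i) = ell G (g i))
    (hproj : ∀ i j, j ≠ i →
      projOn G (axisSet G (g i)) (axisSet G (g j)) ⊆ openSeg G (a i) (b i)) :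
    Function.Injective (FreeGroup.lift g) := by
  have hA i : IsConvex G (axisSet G (g i)) := isConvex_axisSet hT (hni i) (hl i)
  have hgate {i j} (hij : i ≠ j) {x ci cj} (hi : IsGate G (axisSet G (g i)) x ci)
      (hj : IsGate G (axisSet G (g j)) x cj) (hcj : cj ∉ openSeg G (a j) (b j)) :
      ci ∈ openSeg G (a i) (b i) :=
    hT.isGate_mem_of_isGate_not_mem (hA j) (hA i) (hproj j i hij) (hproj i j hij.symm) hj hi hcj
  refine FreeGroup.injective_lift_of_zpow_ping_pong g
    (fun i => {x | ∃ c ∉ openSeg G (a i) (b i), IsGate G (axisSet G (g i)) x c})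
    (fun i => ⟨a i, a i, fun h => h.2.1 rfl, ha i, fun p _ => by simp⟩) ?_ ?_
  · intro i j hij
    rw [Function.onFun, Set.disjoint_left]
    rintro x ⟨ci, hci, hi⟩ ⟨cj, hcj, hj⟩
    exact hci (hgate hij hi hj hcj)
  · rintro i j hij k hk _ ⟨x, ⟨cj, hcj, hj⟩, rfl⟩
    obtain ⟨ci, hi⟩ := hT.exists_isGate (hA i) (axisSet_nonempty hT.connected (g i)) x
    exact ⟨(g i ^ k) ci,
      zpow_apply_not_mem_openSeg hT (hni i) (hl i) (hab i) hi.1 (hgate hij hi hj hcj) hk,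
      hi.map _ fun _ => zpow_apply_mem_axisSet_iff⟩

/-- The Ping Pong Lemma for trees: if each axis carries an open segment of length equal
to the translation length containing all the projections of the other axes, then the
isometries generate a free group of rank n (the lift from the free group is injective). -/
theorem stmt11 (G : SimpleGraph V) (hT : G.IsTree) (n : ℕ) (g : Fin n → (G ≃g G))
    (hni : ∀ i, noInv G (g i))
    (hyp : ∀ i, 0 < ell G (g i))
    (hP : ∀ i : Fin n, ∃ a b : V, a ∈ axisSet G (g i) ∧ b ∈ axisSet G (g i) ∧
      G.dist a b = ell G (g i) ∧
      ∀ j : Fin n, j ≠ i →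
        projOn G (axisSet G (g i)) (axisSet G (g j)) ⊆ openSeg G a b) :
    Function.Injective (FreeGroup.lift g : FreeGroup (Fin n) →* (G ≃g G)) := by
  rcases subsingleton_or_nontrivial (Fin n) with _ | _
  · exact FreeGroup.injective_lift_of_subsingleton g fun i _ =>
      eq_zero_of_zpow_eq_one hT (hni i) (hyp i)
  · choose a b ha _ hab hproj using hP
    exact injective_lift_of_ping_pong_tree hT g hni hyp a b ha hab hproj
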